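/- arXiv:2408.05830 — 2 statements merged into one kernel-verified Lean document; each statement's English description precedes it below -/
import Mathlib

section
/- With μ = β²/4 + 4π²/l² + π², Pr > 0, γ > 0, l > 0, and β > 0, the rescaled Lorenz parameter r of the compressible Lorenz system equals r = (Ra/l²)·(β²+4π²)·(β/(e^β−1))·(1/(μ² + β²·4π²/l² + γβ²·4π²/l))·(1/(π² + 4π²/l² − β²/4)), and setting r = 1 yields the critical Rayleigh number Ra*_β = (l²/(β²+4π²))·((e^β−1)/β)·(μ² + β²·4π²/l² + γβ²·4π²/l)·(π² + 4π²/l² − β²/4). -/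
open Real

/-- `b` stands for the factor `β / (1 - e^{-β})` common to `e₄` and `e₅`, which cancels. -/
lemma lorenz_ratio_eq {Ra K b S D A β Pr μ l : ℝ} (hRa : 0 ≤ Ra) (hb : b ≠ 0) (hPr : Pr ≠ 0)
    (hμ : μ ≠ 0) :
    √Ra * (K / (2 * π * l)) * b * (2 * π * Pr * √Ra / (μ * l)) /
        (-(K / (4 * π ^ 2)) * b * S * (-(4 * π ^ 2 * Pr / (μ * K)) * D * (A / β))) =
      Ra / l ^ 2 * K * (β / A) * (1 / D) * (1 / S) := by
  have hπ : π ≠ 0 := pi_ne_zero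
  field_simp
  rw [sq_sqrt hRa]
  ring

lemma lorenz_r_eq_div_critical_Ra {𝕜 : Type*} [Field 𝕜] (Ra K A D S β l : 𝕜) :
    Ra / l ^ 2 * K * (β / A) * (1 / D) * (1 / S) = Ra / (l ^ 2 / K * (A / β) * D * S) := by
  simp only [div_eq_mul_inv, mul_inv, inv_inv, one_mul]
  ring

/-- The rescaled Lorenz parameter `r = e₅e₂/(e₄e₁)` of the compressible Lorenz system
equals the stated expression in `Ra, β, l, γ`, and `r = 1` holds exactly at the
critical Rayleigh number `Ra*_β`. -/
theorem compressible_lorenz_r_and_critical_Ra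
    (β l γ Pr Ra μ e₁ e₂ e₄ e₅ r : ℝ)
    (hβ : 0 < β) (hl : 0 < l) (hγ : 0 < γ) (hPr : 0 < Pr) (hRa : 0 ≤ Ra)
    (hsub : β ^ 2 / 4 < π ^ 2 + 4 * π ^ 2 / l ^ 2)
    (hμ : μ = β ^ 2 / 4 + 4 * π ^ 2 / l ^ 2 + π ^ 2)
    (he₁ : e₁ = -(4 * π ^ 2 * Pr / (μ * (β ^ 2 + 4 * π ^ 2))) *
      (μ ^ 2 + β ^ 2 * (4 * π ^ 2 / l ^ 2) + γ * β ^ 2 * (4 * π ^ 2 / l)) *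
      ((Real.exp β - 1) / β))
    (he₂ : e₂ = 2 * π * Pr * Real.sqrt Ra / (μ * l))
    (he₄ : e₄ = -((β ^ 2 + 4 * π ^ 2) / (4 * π ^ 2)) * (β / (1 - Real.exp (-β))) *
      (π ^ 2 + 4 * π ^ 2 / l ^ 2 - β ^ 2 / 4))
    (he₅ : e₅ = Real.sqrt Ra * ((β ^ 2 + 4 * π ^ 2) / (2 * π * l)) *
      (β / (1 - Real.exp (-β))))
    (hr : r = e₅ * e₂ / (e₄ * e₁)) :
    r = (Ra / l ^ 2) * (β ^ 2 + 4 * π ^ 2) * (β / (Real.exp β - 1)) *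
        (1 / (μ ^ 2 + β ^ 2 * (4 * π ^ 2 / l ^ 2) + γ * β ^ 2 * (4 * π ^ 2 / l))) *
        (1 / (π ^ 2 + 4 * π ^ 2 / l ^ 2 - β ^ 2 / 4)) ∧
    (r = 1 ↔
      Ra = (l ^ 2 / (β ^ 2 + 4 * π ^ 2)) * ((Real.exp β - 1) / β) *
        (μ ^ 2 + β ^ 2 * (4 * π ^ 2 / l ^ 2) + γ * β ^ 2 * (4 * π ^ 2 / l)) *
        (π ^ 2 + 4 * π ^ 2 / l ^ 2 - β ^ 2 / 4)) := by
  have hA : 0 < exp β - 1 := sub_pos.mpr (one_lt_exp_iff.mpr hβ)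
  have hB : 0 < 1 - exp (-β) := sub_pos.mpr (exp_lt_one_iff.mpr (neg_neg_of_pos hβ))
  have hS : 0 < π ^ 2 + 4 * π ^ 2 / l ^ 2 - β ^ 2 / 4 := sub_pos.mpr hsub
  have hμ₀ : 0 < μ := hμ ▸ by positivity
  have hD : 0 < μ ^ 2 + β ^ 2 * (4 * π ^ 2 / l ^ 2) + γ * β ^ 2 * (4 * π ^ 2 / l) := by
    positivity
  rw [he₁, he₂, he₄, he₅, lorenz_ratio_eq hRa (by positivity) hPr.ne' hμ₀.ne'] at hr
  refine ⟨hr, ?_⟩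
  rw [hr, lorenz_r_eq_div_critical_Ra, div_eq_one_iff_eq (by positivity)]
end

section
/- To first order in β, the critical Rayleigh number satisfies Ra*_β = Ra*₀·(1 + β/2) + O(β²); in particular, for all sufficiently small β > 0, Ra*_β > Ra*₀. -/
/-!
Writing `Ra*_β = F(β²) · (e^β - 1)/β` with `F` differentiable at `0` and `F 0 = Ra*₀`, one has
`F(β²) = Ra*₀ + O(β²)` and `(e^β - 1)/β = 1 + β/2 + O(β²)`, and the expansion follows by multiplying
the two. Its linear term `Ra*₀ β / 2` is positive and dominates the `O(β²)` error for small `β > 0`.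
-/

open Real Filter Asymptotics Topology

namespace Asymptotics

theorem isBigO_mul_sub_mul {α R : Type*} [SeminormedRing R] {l : Filter α} {f g u v : α → R}
    {k : α → ℝ} (hf : f =O[l] fun _ => (1 : ℝ)) (hv : v =O[l] fun _ => (1 : ℝ))
    (hfu : (fun x => f x - u x) =O[l] k) (hgv : (fun x => g x - v x) =O[l] k) :
    (fun x => f x * g x - u x * v x) =O[l] k := by
  have h₁ := hf.mul hgv
  have h₂ := hfu.mul hv
  simp only [one_mul, mul_one] at h₁ h₂
  exact (h₁.add h₂).congr_left fun x => by rw [mul_sub, sub_mul]; abel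

end Asymptotics

theorem Real.exp_sub_one_div_sub_isBigO :
    (fun x : ℝ => (exp x - 1) / x - (1 + x / 2)) =O[𝓝[≠] 0] (· ^ 2) := by
  have h := ((exp_sub_sum_range_isBigO_pow 3).mono nhdsWithin_le_nhds).mul
    (isBigO_refl (fun x : ℝ => x⁻¹) (𝓝[≠] 0))
  refine h.congr' ?_ ?_ <;> filter_upwards [self_mem_nhdsWithin] with x (hx : x ≠ 0)
  · simp only [Finset.sum_range_succ, Finset.sum_range_zero]
    field_simp
    ring
  · field_simp

theorem eventually_lt_of_isBigO_sub_affine {f : ℝ → ℝ} {c d : ℝ} (hd : 0 < d)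
    (h : (fun x => f x - (c + d * x)) =O[𝓝[>] 0] (· ^ 2)) : ∀ᶠ x in 𝓝[>] 0, c < f x := by
  have ho : (fun x => f x - (c + d * x)) =o[𝓝[>] 0] fun x => x :=
    h.trans_isLittleO ((isLittleO_pow_id one_lt_two).mono nhdsWithin_le_nhds)
  filter_upwards [ho.def (half_pos hd), self_mem_nhdsWithin] with x hx (hx0 : 0 < x)
  rw [Real.norm_eq_abs, Real.norm_eq_abs, abs_of_pos hx0] at hx
  nlinarith [neg_abs_le (f x - (c + d * x))]

noncomputable def criticalRaEvenPart (l γ t : ℝ) : ℝ :=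
  l ^ 2 / (t + 4 * π ^ 2) *
    ((π ^ 2 + 4 * π ^ 2 / l ^ 2 + t / 4) ^ 2 + t * (4 * π ^ 2 / l ^ 2) + γ * t * (4 * π ^ 2 / l)) *
    (π ^ 2 + 4 * π ^ 2 / l ^ 2 - t / 4)

theorem criticalRaEvenPart_zero (l γ : ℝ) :
    criticalRaEvenPart l γ 0 = l ^ 2 / (4 * π ^ 2) * (π ^ 2 + 4 * π ^ 2 / l ^ 2) ^ 3 := by
  simp only [criticalRaEvenPart]
  ring

theorem differentiableAt_criticalRaEvenPart (l γ : ℝ) {t : ℝ} (ht : t + 4 * π ^ 2 ≠ 0) :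
    DifferentiableAt ℝ (criticalRaEvenPart l γ) t := by
  unfold criticalRaEvenPart
  fun_prop (disch := exact ht)

theorem critical_Ra_first_order_general (l γ : ℝ) (hl : 0 < l)
    (Ra : ℝ → ℝ) (Ra₀ : ℝ)
    (hRa : Ra = fun β => (l ^ 2 / (β ^ 2 + 4 * π ^ 2)) * ((Real.exp β - 1) / β) *
      ((π ^ 2 + 4 * π ^ 2 / l ^ 2 + β ^ 2 / 4) ^ 2 +
        β ^ 2 * (4 * π ^ 2 / l ^ 2) + γ * β ^ 2 * (4 * π ^ 2 / l)) *
      (π ^ 2 + 4 * π ^ 2 / l ^ 2 - β ^ 2 / 4))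
    (hRa₀ : Ra₀ = (l ^ 2 / (4 * π ^ 2)) * (π ^ 2 + 4 * π ^ 2 / l ^ 2) ^ 3) :
    (fun β => Ra β - Ra₀ * (1 + β / 2)) =O[nhdsWithin 0 (Set.Ioi 0)]
      (fun β => β ^ 2) ∧
    ∀ᶠ β in nhdsWithin 0 (Set.Ioi 0), Ra₀ < Ra β := by
  set F := criticalRaEvenPart l γ
  have hRa_eq : Ra = fun β => F (β ^ 2) * ((exp β - 1) / β) := by
    rw [hRa]; funext β; simp only [F, criticalRaEvenPart]; ring
  have hF0 : F 0 = Ra₀ := by rw [hRa₀]; exact criticalRaEvenPart_zero l γ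
  have hF : DifferentiableAt ℝ F 0 := differentiableAt_criticalRaEvenPart l γ (by positivity)
  have hsq : Tendsto (fun β : ℝ => β ^ 2) (𝓝[>] 0) (𝓝 0) :=
    ((continuous_pow 2).tendsto' 0 0 (zero_pow two_ne_zero)).mono_left nhdsWithin_le_nhds
  have hexpansion : (fun β => Ra β - Ra₀ * (1 + β / 2)) =O[𝓝[>] 0] fun β => β ^ 2 := by
    rw [hRa_eq, ← hF0]
    refine isBigO_mul_sub_mul ((hF.continuousAt.tendsto.comp hsq).isBigO_one ℝ) ?_ ?_
      (exp_sub_one_div_sub_isBigO.mono (nhdsWithin_mono 0 fun _ hx => ne_of_gt hx))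
    · exact (((continuous_const.add (continuous_id.div_const 2)).tendsto 0).mono_left
        nhdsWithin_le_nhds).isBigO_one ℝ
    · simpa [Function.comp_def] using hF.isBigO_sub.comp_tendsto hsq
  have hRa₀_pos : 0 < Ra₀ := by rw [hRa₀]; positivity
  exact ⟨hexpansion, eventually_lt_of_isBigO_sub_affine (half_pos hRa₀_pos)
    (hexpansion.congr_left fun β => by ring)⟩

/-- First-order expansion of the critical Rayleigh number in the compressibility
parameter: `Ra*_β = Ra*₀ (1 + β/2) + O(β²)` as `β → 0⁺`, and in particular
`Ra*_β > Ra*₀` for all sufficiently small `β > 0`. -/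
theorem critical_Ra_first_order (l γ : ℝ) (hl : 0 < l) (hγ : 0 < γ)
    (Ra : ℝ → ℝ) (Ra₀ : ℝ)
    (hRa : Ra = fun β => (l ^ 2 / (β ^ 2 + 4 * π ^ 2)) * ((Real.exp β - 1) / β) *
      ((π ^ 2 + 4 * π ^ 2 / l ^ 2 + β ^ 2 / 4) ^ 2 +
        β ^ 2 * (4 * π ^ 2 / l ^ 2) + γ * β ^ 2 * (4 * π ^ 2 / l)) *
      (π ^ 2 + 4 * π ^ 2 / l ^ 2 - β ^ 2 / 4))
    (hRa₀ : Ra₀ = (l ^ 2 / (4 * π ^ 2)) * (π ^ 2 + 4 * π ^ 2 / l ^ 2) ^ 3) :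
    (fun β => Ra β - Ra₀ * (1 + β / 2)) =O[nhdsWithin 0 (Set.Ioi 0)]
      (fun β => β ^ 2) ∧
    ∀ᶠ β in nhdsWithin 0 (Set.Ioi 0), Ra₀ < Ra β :=
  critical_Ra_first_order_general l γ hl Ra Ra₀ hRa hRa₀
end
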